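/- Let K(Δq, Δk) = cos²(a·Δq + b·Δk) · cos²(b·Δq + a·Δk) with a ≠ 0 and b ≠ 0. Then there do not exist functions f, g : ℝ → ℝ such that K(Δq, Δk) = f(Δq)·g(Δk) for all (Δq, Δk) in a neighborhood of (0,0). -/
import Mathlib

open Real

lemma sin_ne_zero_of_small (t : ℝ) (h0 : t ≠ 0) (h : |t| < Real.pi) :
    Real.sin t ≠ 0 := by
  have habs := abs_lt.mp h
  rcases lt_or_gt_of_ne h0 with hneg | hpos
  · have hpos' : 0 < Real.sin (-t) :=
      Real.sin_pos_of_pos_of_lt_pi (by linarith) (by linarith)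
    rw [Real.sin_neg] at hpos'
    intro hc; rw [hc] at hpos'; simp at hpos'
  · have hpos' : 0 < Real.sin t := Real.sin_pos_of_pos_of_lt_pi hpos habs.2
    exact ne_of_gt hpos'

theorem nonseparable_kernel (a b : ℝ) (ha : a ≠ 0) (hb : b ≠ 0) :
    ¬ ∃ (f g : ℝ → ℝ) (U : Set (ℝ × ℝ)), U ∈ nhds ((0 : ℝ), (0 : ℝ)) ∧
      ∀ p ∈ U, Real.cos (a * p.1 + b * p.2) ^ 2 * Real.cos (b * p.1 + a * p.2) ^ 2 =
        f p.1 * g p.2 := by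
  rintro ⟨f, g, U, hU, hK⟩
  obtain ⟨ε, hε, hball⟩ := Metric.mem_nhds_iff.mp hU
  have hπ := Real.pi_pos
  set M := |a| + |b| with hM
  have hMpos : 0 < M := by positivity
  set x := min (ε / 2) (Real.pi / (4 * M)) with hxdef
  have hxpos : 0 < x := lt_min (by linarith) (by positivity)
  have hxε : x < ε := lt_of_le_of_lt (min_le_left _ _) (by linarith)
  have hxM : M * x < Real.pi / 2 := by
    have h1 : x ≤ Real.pi / (4 * M) := min_le_right _ _
    have h2 : M * x ≤ M * (Real.pi / (4 * M)) := by nlinarith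
    have h3 : M * (Real.pi / (4 * M)) = Real.pi / 4 := by field_simp
    nlinarith
  clear_value x M
  clear hxdef
  -- membership of test points
  have hmem : ∀ p q : ℝ, |p| < ε → |q| < ε → (p, q) ∈ U := by
    intro p q hp hq
    apply hball
    rw [Metric.mem_ball, Prod.dist_eq]
    simp only [Real.dist_eq, sub_zero]
    exact max_lt hp hq
  have hxabs : |x| < ε := by rwa [abs_of_pos hxpos]
  have h0abs : |(0 : ℝ)| < ε := by simpa using hε
  have e00 := hK (0, 0) (hmem 0 0 h0abs h0abs)
  have ex0 := hK (x, 0) (hmem x 0 hxabs h0abs)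
  have e0x := hK (0, x) (hmem 0 x h0abs hxabs)
  have exx := hK (x, x) (hmem x x hxabs hxabs)
  simp only [mul_zero, zero_mul, add_zero, zero_add, Real.cos_zero, one_pow, one_mul,
    mul_one] at e00 ex0 e0x exx
  -- rewrite a*x + b*x as (a+b)*x
  have hrw1 : a * x + b * x = (a + b) * x := by ring
  have hrw2 : b * x + a * x = (a + b) * x := by ring
  rw [hrw1, hrw2] at exx
  -- positivity of cosines
  have hcos : ∀ c : ℝ, |c| ≤ M → 0 < Real.cos (c * x) := by
    intro c hc
    apply Real.cos_pos_of_mem_Ioo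
    constructor
    · have : |c * x| ≤ M * x := by
        rw [abs_mul, abs_of_pos hxpos]
        exact mul_le_mul_of_nonneg_right hc (le_of_lt hxpos)
      have := abs_le.mp this
      linarith [this.1]
    · have : |c * x| ≤ M * x := by
        rw [abs_mul, abs_of_pos hxpos]
        exact mul_le_mul_of_nonneg_right hc (le_of_lt hxpos)
      have := abs_le.mp this
      linarith [this.2]
  have hca : 0 < Real.cos (a * x) := hcos a (by rw [hM]; exact le_add_of_nonneg_right (abs_nonneg b))
  have hcb : 0 < Real.cos (b * x) := hcos b (by rw [hM]; exact le_add_of_nonneg_left (abs_nonneg a))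
  have hcab : 0 < Real.cos ((a + b) * x) := hcos (a + b) (hM ▸ abs_add_le a b)
  have hcamb : 0 < Real.cos ((a - b) * x) := hcos (a - b) (hM ▸ abs_sub a b)
  -- key separability consequence: A^2 = D^2 with A = cos((a+b)x)^2, D = cos(ax)^2 cos(bx)^2
  have key : (Real.cos ((a + b) * x) ^ 2) ^ 2 =
      (Real.cos (a * x) ^ 2 * Real.cos (b * x) ^ 2) ^ 2 := by
    linear_combination exx + (f x * g x) * e00 - (f 0 * g x) * ex0
      - (Real.cos (a * x) ^ 2 * Real.cos (b * x) ^ 2) * e0x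
  -- deduce A = D from positivity
  have hA : Real.cos ((a + b) * x) ^ 2 = Real.cos (a * x) ^ 2 * Real.cos (b * x) ^ 2 := by
    have hApos : 0 < Real.cos ((a + b) * x) ^ 2 := by positivity
    have hDpos : 0 < Real.cos (a * x) ^ 2 * Real.cos (b * x) ^ 2 := by positivity
    nlinarith [key, hApos, hDpos]
  -- sum and difference identities
  have hsum : Real.cos ((a + b) * x) + Real.cos ((a - b) * x) =
      2 * Real.cos (a * x) * Real.cos (b * x) := by
    have h := Real.cos_add_cos ((a + b) * x) ((a - b) * x)
    have e1 : ((a + b) * x + (a - b) * x) / 2 = a * x := by ring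
    have e2 : ((a + b) * x - (a - b) * x) / 2 = b * x := by ring
    rw [e1, e2] at h
    exact h
  have hdiff : Real.cos ((a + b) * x) - Real.cos ((a - b) * x) =
      -2 * Real.sin (a * x) * Real.sin (b * x) := by
    have h := Real.cos_sub_cos ((a + b) * x) ((a - b) * x)
    have e1 : ((a + b) * x + (a - b) * x) / 2 = a * x := by ring
    have e2 : ((a + b) * x - (a - b) * x) / 2 = b * x := by ring
    rw [e1, e2] at h
    exact h
  -- factor: (3u+v)(u-v) = 0
  have hz : (3 * Real.cos ((a + b) * x) + Real.cos ((a - b) * x)) *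
      (Real.cos ((a + b) * x) - Real.cos ((a - b) * x)) = 0 := by
    linear_combination 4 * hA
      - (Real.cos ((a + b) * x) + Real.cos ((a - b) * x)
          + 2 * Real.cos (a * x) * Real.cos (b * x)) * hsum
  rcases mul_eq_zero.mp hz with h1 | h2
  · linarith
  · -- u = v, so sin(ax) sin(bx) = 0
    rw [h2] at hdiff
    have hss : Real.sin (a * x) * Real.sin (b * x) = 0 := by linarith
    have hax : a * x ≠ 0 := mul_ne_zero ha (ne_of_gt hxpos)
    have hbx : b * x ≠ 0 := mul_ne_zero hb (ne_of_gt hxpos)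
    have haxabs : |a * x| < Real.pi := by
      have : |a * x| ≤ M * x := by
        rw [abs_mul, abs_of_pos hxpos]
        have : |a| ≤ M := by rw [hM]; exact le_add_of_nonneg_right (abs_nonneg b)
        exact mul_le_mul_of_nonneg_right this (le_of_lt hxpos)
      linarith
    have hbxabs : |b * x| < Real.pi := by
      have : |b * x| ≤ M * x := by
        rw [abs_mul, abs_of_pos hxpos]
        have : |b| ≤ M := by rw [hM]; exact le_add_of_nonneg_left (abs_nonneg a)
        exact mul_le_mul_of_nonneg_right this (le_of_lt hxpos)
      linarith
    rcases mul_eq_zero.mp hss with h | h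
    · exact sin_ne_zero_of_small _ hax haxabs h
    · exact sin_ne_zero_of_small _ hbx hbxabs h
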